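/- arXiv:2605.13997 — 3 statements merged into one kernel-verified Lean document; each statement's English description precedes it below -/
import Mathlib

section
/- Let E₀, E₁, E₂ be finite-dimensional real inner product spaces and let d₁ : E₁ → E₀ and d₂ : E₂ → E₁ be linear maps satisfying d₁ ∘ d₂ = 0, with L₁ = d₁† ∘ d₁ + d₂ ∘ d₂†. Then the dimension of ker(L₁) equals dim ker(d₁) − dim range(d₂); i.e., dim ker(L₁) is the first Betti number of the chain complex (E₂, E₁, E₀). -/
/-!
Since `⟪L₁ x, x⟫ = ‖d₁ x‖² + ‖d₂† x‖²`, we get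
`ker L₁ = ker d₁ ⊓ ker d₂† = ker d₁ ⊓ (range d₂)ᗮ`: the harmonic space is the orthogonal complement
of `range d₂` inside `ker d₁`, which contains `range d₂` because `d₁ ∘ d₂ = 0`.
-/

open LinearMap Submodule

namespace LinearMap

variable {𝕜 E F G : Type*} [RCLike 𝕜]
  [NormedAddCommGroup E] [InnerProductSpace 𝕜 E] [FiniteDimensional 𝕜 E]
  [NormedAddCommGroup F] [InnerProductSpace 𝕜 F] [FiniteDimensional 𝕜 F]
  [NormedAddCommGroup G] [InnerProductSpace 𝕜 G] [FiniteDimensional 𝕜 G]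

theorem re_inner_adjoint_comp_add_comp_adjoint_self (A : E →ₗ[𝕜] F) (B : G →ₗ[𝕜] E) (x : E) :
    RCLike.re (inner 𝕜 ((A.adjoint ∘ₗ A + B ∘ₗ B.adjoint) x) x)
      = ‖A x‖ ^ 2 + ‖B.adjoint x‖ ^ 2 := by
  rw [add_apply, inner_add_left, map_add, comp_apply, comp_apply, adjoint_inner_left,
    ← adjoint_inner_right B (B.adjoint x) x, inner_self_eq_norm_sq, inner_self_eq_norm_sq]

theorem ker_adjoint_comp_add_comp_adjoint (A : E →ₗ[𝕜] F) (B : G →ₗ[𝕜] E) :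
    ker (A.adjoint ∘ₗ A + B ∘ₗ B.adjoint) = ker A ⊓ ker B.adjoint := by
  ext x
  simp only [mem_inf, mem_ker]
  constructor
  · intro hx
    have hsum := re_inner_adjoint_comp_add_comp_adjoint_self A B x
    rw [hx, inner_zero_left, map_zero] at hsum
    obtain ⟨hA, hB⟩ := (add_eq_zero_iff_of_nonneg (sq_nonneg _) (sq_nonneg _)).mp hsum.symm
    exact ⟨by simpa using hA, by simpa using hB⟩
  · rintro ⟨hA, hB⟩
    simp [hA, hB]

end LinearMap

/-- If `d₁ ∘ d₂ = 0`, then `dim ker L₁ = dim ker d₁ − dim range d₂`, the first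
Betti number of the chain complex `(E₂, E₁, E₀)`. -/
theorem dim_ker_hodge_laplacian_eq_betti
    {E₀ E₁ E₂ : Type*}
    [NormedAddCommGroup E₀] [InnerProductSpace ℝ E₀] [FiniteDimensional ℝ E₀]
    [NormedAddCommGroup E₁] [InnerProductSpace ℝ E₁] [FiniteDimensional ℝ E₁]
    [NormedAddCommGroup E₂] [InnerProductSpace ℝ E₂] [FiniteDimensional ℝ E₂]
    (d₁ : E₁ →ₗ[ℝ] E₀) (d₂ : E₂ →ₗ[ℝ] E₁)
    (hchain : d₁ ∘ₗ d₂ = 0) :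
    Module.finrank ℝ
        (LinearMap.ker (LinearMap.adjoint d₁ ∘ₗ d₁ + d₂ ∘ₗ LinearMap.adjoint d₂))
      = Module.finrank ℝ (LinearMap.ker d₁) - Module.finrank ℝ (LinearMap.range d₂) := by
  have hker : ker (d₁.adjoint ∘ₗ d₁ + d₂ ∘ₗ d₂.adjoint) = (range d₂)ᗮ ⊓ ker d₁ := by
    rw [ker_adjoint_comp_add_comp_adjoint, ← orthogonal_range, inf_comm]
  have hdim := finrank_add_inf_finrank_orthogonal (range_le_ker_iff.mpr hchain)
  rw [hker]
  omega
end

section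
/- Let V be a finite type and let Φ be a non-negative, monotone, submodular function on finite subsets of V. For a target size k with 1 ≤ k ≤ |V|, let S⋆ be the set produced by the greedy algorithm that starts from the empty set and at each of k steps adds an element i maximizing the marginal gain Φ(S ∪ {i}) − Φ(S). Then Φ(S⋆) ≥ (1 − (1 − 1/k)^k) · max_{|S| = k} Φ(S) ≥ (1 − 1/e) · max_{|S| = k} Φ(S). -/
/-! Adding the whole of an optimal `T` to the current greedy set `S` gains at least `Φ T - Φ S`
(monotonicity), and by submodularity this is at most the sum of the `k` single-element gains at `S`,
each bounded by the greedy gain. So every step closes at least a `1/k` fraction of the gap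
`Φ T - Φ S`, the gap decays like `(1 - 1/k)^j`, and `(1 - 1/k)^k ≤ e⁻¹`. -/

open Finset

section

variable {V : Type*} [DecidableEq V]

def IsSubmodular (Φ : Finset V → ℝ) : Prop :=
  ∀ S S' : Finset V, ∀ i : V, S ⊆ S' → i ∉ S' → Φ (insert i S') - Φ S' ≤ Φ (insert i S) - Φ S

variable {Φ : Finset V → ℝ} (hmono : Monotone Φ) (hsub : IsSubmodular Φ)
include hmono hsub

theorem sub_le_sum_marginal (A T : Finset V) :
    Φ (A ∪ T) - Φ A ≤ ∑ i ∈ T, (Φ (insert i A) - Φ A) := by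
  induction T using Finset.induction_on with
  | empty => simp
  | insert a T haT ih =>
    have hstep : Φ (A ∪ insert a T) - Φ (A ∪ T) ≤ Φ (insert a A) - Φ A := by
      rw [union_insert]
      by_cases ha : a ∈ A ∪ T
      · rw [insert_eq_of_mem ha, sub_self]
        exact sub_nonneg.2 (hmono (subset_insert a A))
      · exact hsub A (A ∪ T) a subset_union_left ha
    rw [sum_insert haT]
    linarith

theorem sub_le_card_mul_of_forall_le {S T : Finset V} {i : V}
    (hmax : ∀ i', Φ (insert i' S) - Φ S ≤ Φ (insert i S) - Φ S) :
    Φ T - Φ S ≤ #T * (Φ (insert i S) - Φ S) :=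
  calc Φ T - Φ S ≤ Φ (S ∪ T) - Φ S := sub_le_sub_right (hmono subset_union_right) _
    _ ≤ ∑ x ∈ T, (Φ (insert x S) - Φ S) := sub_le_sum_marginal hmono hsub S T
    _ ≤ ∑ _x ∈ T, (Φ (insert i S) - Φ S) := sum_le_sum fun x _ => hmax x
    _ = #T * (Φ (insert i S) - Φ S) := by rw [sum_const, nsmul_eq_mul]

theorem sub_insert_le_of_forall_le {S T : Finset V} {i : V} (hT : T.Nonempty)
    (hmax : ∀ i', Φ (insert i' S) - Φ S ≤ Φ (insert i S) - Φ S) :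
    Φ T - Φ (insert i S) ≤ (1 - 1 / #T) * (Φ T - Φ S) := by
  have hgain := sub_le_card_mul_of_forall_le hmono hsub (T := T) hmax
  have hcard : (0 : ℝ) < #T := by exact_mod_cast hT.card_pos
  rw [sub_mul, one_mul, div_mul_eq_mul_div, one_mul, le_sub_iff_add_le, ← le_sub_iff_add_le',
    div_le_iff₀ hcard]
  linarith

end

theorem greedy_submodular_guarantee_general
    {V : Type*} [DecidableEq V]
    (Φ : Finset V → ℝ)
    (hnn : ∀ S : Finset V, 0 ≤ Φ S)
    (hmono : ∀ S S' : Finset V, S ⊆ S' → Φ S ≤ Φ S')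
    (hsub : ∀ S S' : Finset V, ∀ i : V, S ⊆ S' → i ∉ S' →
      Φ (insert i S') - Φ S' ≤ Φ (insert i S) - Φ S)
    (k : ℕ) (hk : 1 ≤ k)
    (S : ℕ → Finset V) (h0 : S 0 = ∅)
    (hgreedy : ∀ j < k, ∃ i ∉ S j, S (j + 1) = insert i (S j) ∧
      ∀ i' : V, Φ (insert i' (S j)) - Φ (S j) ≤ Φ (insert i (S j)) - Φ (S j)) :
    ∀ T : Finset V, T.card = k →
      (1 - 1 / Real.exp 1) * Φ T ≤ (1 - (1 - 1 / (k : ℝ)) ^ k) * Φ T ∧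
      (1 - (1 - 1 / (k : ℝ)) ^ k) * Φ T ≤ Φ (S k) := by
  intro T hT
  have hk' : (1 : ℝ) ≤ k := by exact_mod_cast hk
  have hq : 0 ≤ 1 - 1 / (k : ℝ) := sub_nonneg.2 (div_le_one_of_le₀ hk' (by positivity))
  have hgap : Φ T - Φ (S k) ≤ (1 - 1 / (k : ℝ)) ^ k * (Φ T - Φ (S 0)) :=
    le_geom (u := fun j => Φ T - Φ (S j)) hq k fun j hj => by
      obtain ⟨i, -, hstep, hmax⟩ := hgreedy j hj
      simp only [hstep]
      rw [← hT]
      exact sub_insert_le_of_forall_le hmono hsub (card_pos.1 (hT ▸ hk)) hmax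
  have hexp : (1 - 1 / (k : ℝ)) ^ k ≤ 1 / Real.exp 1 := by
    simpa [Real.exp_neg] using Real.one_sub_div_pow_le_exp_neg hk'
  rw [h0] at hgap
  refine ⟨mul_le_mul_of_nonneg_right (by linarith) (hnn T), ?_⟩
  nlinarith [mul_nonneg (pow_nonneg hq k) (hnn ∅)]

/-- Nemhauser–Wolsey–Fisher greedy guarantee: for a non-negative monotone
submodular `Φ` and a greedy sequence `S 0 = ∅, …, S k` in which each step
adds an element maximizing the marginal gain, the greedy set `S k` satisfies
`Φ (S k) ≥ (1 − (1 − 1/k)^k) · max_{|T| = k} Φ T ≥ (1 − 1/e) · max_{|T| = k} Φ T`. -/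
theorem greedy_submodular_guarantee
    {V : Type*} [Fintype V] [DecidableEq V]
    (Φ : Finset V → ℝ)
    (hnn : ∀ S : Finset V, 0 ≤ Φ S)
    (hmono : ∀ S S' : Finset V, S ⊆ S' → Φ S ≤ Φ S')
    (hsub : ∀ S S' : Finset V, ∀ i : V, S ⊆ S' → i ∉ S' →
      Φ (insert i S') - Φ S' ≤ Φ (insert i S) - Φ S)
    (k : ℕ) (hk : 1 ≤ k) (hkcard : k ≤ Fintype.card V)
    (S : ℕ → Finset V) (h0 : S 0 = ∅)
    (hgreedy : ∀ j < k, ∃ i ∉ S j, S (j + 1) = insert i (S j) ∧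
      ∀ i' : V, Φ (insert i' (S j)) - Φ (S j) ≤ Φ (insert i (S j)) - Φ (S j)) :
    ∀ T : Finset V, T.card = k →
      (1 - 1 / Real.exp 1) * Φ T ≤ (1 - (1 - 1 / (k : ℝ)) ^ k) * Φ T ∧
      (1 - (1 - 1 / (k : ℝ)) ^ k) * Φ T ≤ Φ (S k) :=
  greedy_submodular_guarantee_general Φ hnn hmono hsub k hk S h0 hgreedy
end

section
/- Consider the three perfect matchings M_a = {{0,1},{2,3}}, M_b = {{0,2},{1,3}}, M_c = {{0,3},{1,2}} of the complete graph on Fin 4. For every fixed 2-element subset S of Fin 4, the minimum over the three matchings M of the coverage fraction (number of edges of M intersected by S) / 2 equals exactly 1/2, and 1/2 < 1 − 1/e. By contrast, for each individual matching M there exists a 2-element subset S (namely any transversal of the two matching edges) whose coverage fraction on M equals 1. -/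
/-- The three perfect matchings of `K₄` on `Fin 4`. -/
def matchingA : Finset (Finset (Fin 4)) := {{0, 1}, {2, 3}}
def matchingB : Finset (Finset (Fin 4)) := {{0, 2}, {1, 3}}
def matchingC : Finset (Finset (Fin 4)) := {{0, 3}, {1, 2}}

/-- Coverage fraction of a subset `S` on a matching `M`: the number of edges
of `M` intersected by `S`, divided by `|M| = 2`. -/
noncomputable def coverageFraction (S : Finset (Fin 4))
    (M : Finset (Finset (Fin 4))) : ℝ :=
  ((M.filter fun e => (S ∩ e).Nonempty).card : ℝ) / 2

def cov (S : Finset (Fin 4)) (M : Finset (Finset (Fin 4))) : ℕ :=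
  (M.filter fun e => (S ∩ e).Nonempty).card

lemma nat_min (S : Finset (Fin 4)) (h : S.card = 2) :
    min (cov S matchingA) (min (cov S matchingB) (cov S matchingC)) = 1 := by
  revert h; revert S; decide

lemma cf_eq (S : Finset (Fin 4)) (M : Finset (Finset (Fin 4))) :
    coverageFraction S M = (cov S M : ℝ) / 2 := rfl

/-- For every fixed 2-element subset `S` of `Fin 4`, the minimum over the
three perfect matchings of `K₄` of the coverage fraction of `S` equals
exactly `1/2`, and `1/2 < 1 − 1/e`; by contrast, each individual matching
admits a 2-element subset with coverage fraction `1`. -/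
theorem k4_matching_worst_case_coverage :
    (∀ S : Finset (Fin 4), S.card = 2 →
      min (coverageFraction S matchingA)
        (min (coverageFraction S matchingB) (coverageFraction S matchingC))
        = 1 / 2) ∧
    ((1 : ℝ) / 2 < 1 - 1 / Real.exp 1) ∧
    (∀ M : Finset (Finset (Fin 4)),
      (M = matchingA ∨ M = matchingB ∨ M = matchingC) →
      ∃ S : Finset (Fin 4), S.card = 2 ∧ coverageFraction S M = 1) := by
  refine ⟨?_, ?_, ?_⟩
  · intro S hS
    have h := nat_min S hS
    rw [cf_eq, cf_eq, cf_eq,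
      show ∀ a b : ℝ, min (a/2) (b/2) = min a b / 2 by
        intro a b; rw [div_eq_mul_inv, div_eq_mul_inv, div_eq_mul_inv,
          ← min_mul_of_nonneg _ _ (by norm_num : (0:ℝ) ≤ (2:ℝ)⁻¹)],
      show ∀ a b : ℝ, min (a/2) (b/2) = min a b / 2 by
        intro a b; rw [div_eq_mul_inv, div_eq_mul_inv, div_eq_mul_inv,
          ← min_mul_of_nonneg _ _ (by norm_num : (0:ℝ) ≤ (2:ℝ)⁻¹)]]
    rw [← Nat.cast_min, ← Nat.cast_min, h]
    norm_num
  · have h : (2 : ℝ) < Real.exp 1 := by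
      have := Real.exp_one_gt_d9; linarith
    have h0 : (0 : ℝ) < Real.exp 1 := by linarith
    rw [lt_sub_iff_add_lt, div_add_div _ _ (by norm_num) (ne_of_gt h0),
      div_lt_one (by positivity)]
    linarith
  · intro M hM
    rcases hM with rfl | rfl | rfl
    · exact ⟨{0, 2}, by decide, by
        rw [cf_eq, show cov {0, 2} matchingA = 2 from by decide]; norm_num⟩
    · exact ⟨{0, 1}, by decide, by
        rw [cf_eq, show cov {0, 1} matchingB = 2 from by decide]; norm_num⟩
    · exact ⟨{0, 1}, by decide, by
        rw [cf_eq, show cov {0, 1} matchingC = 2 from by decide]; norm_num⟩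
end
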